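/- Let G be a connected graph on N vertices and T a spanning tree of G rooted at v_r. If a set S of vertex pairs has the property that for every vertex v of T and every i < ⌊log₂ d_T(v)⌋ the pair (v, anc_{2^i}(v)) ∈ S, then |S| ≤ N·⌊log₂ N⌋, and between any two vertices of G there is a walk that is a concatenation of at most 2(⌊log₂ N⌋ + 1) tree paths each joining a pair in S or its reverse. -/

import Mathlib

/-!
Let the hitting time `t x` be the number of parent steps from `x` to the root; it is at most
`d x`. Jumping from `x` by the largest power of two `2 ^ i ≤ t x` lands at a vertex `w` with
`t w ≤ t x - 2 ^ i < 2 ^ i`, so greedy jumps reach the root after at most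
`Nat.size (t x) ≤ ⌊log₂ N⌋ + 1` steps, each of them a recorded pair. Going up from `u` and then
down to `v` doubles this bound.
-/

open Finset

theorem card_biUnion_image_range_le {ι β : Type*} [DecidableEq β] (s : Finset ι) (g : ι → ℕ)
    (F : ι → ℕ → β) : (s.biUnion fun v => (range (g v)).image (F v)).card ≤ ∑ v ∈ s, g v :=
  card_biUnion_le.trans <| sum_le_sum fun _ _ => card_image_le.trans (card_range _).le

namespace List

variable {α : Type*} {R : α → α → Prop}

/-- A walk to `r` is encoded as `l ++ [r]`; two of them combine into a walk between their starts. -/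
theorem exists_isChain_cons_of_meet (hR : ∀ x y, R x y → R y x) {u v r : α} {a b : List α}
    (ha : (a ++ [r]).IsChain R) (hu : (a ++ [r]).head? = some u)
    (hb : (b ++ [r]).IsChain R) (hv : (b ++ [r]).head? = some v) :
    ∃ l, (u :: l).IsChain R ∧ (u :: l).getLast (cons_ne_nil _ _) = v ∧
      l.length = a.length + b.length := by
  have hb' : ([r] ++ b.reverse).IsChain R := by
    rw [show [r] ++ b.reverse = (b ++ [r]).reverse by simp, isChain_reverse]
    exact hb.imp fun _ _ h => hR _ _ h
  obtain ⟨l, hl⟩ : ∃ l, a ++ [r] ++ b.reverse = u :: l := by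
    cases a <;> simp_all
  refine ⟨l, hl ▸ ha.append_overlap hb' (cons_ne_nil _ _), ?_, ?_⟩
  · simp_rw [← hl]
    cases b <;> simp_all
  · have := congrArg length hl
    simp only [length_append, length_reverse, length_cons, length_nil] at this
    omega

end List

section BinaryLifting

variable {α : Type*} {f : α → α} {r : α} {t : α → ℕ}

theorem hitTime_iterate_le (ht : ∀ x, f^[t x] x = r) (hmin : ∀ x n, f^[n] x = r → t x ≤ n)
    {x : α} {k : ℕ} (hk : k ≤ t x) : t (f^[k] x) ≤ t x - k :=
  hmin _ _ <| by rw [← Function.iterate_add_apply, Nat.sub_add_cancel hk, ht]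

theorem exists_isChain_pow_two_jumps (ht : ∀ x, f^[t x] x = r)
    (hmin : ∀ x n, f^[n] x = r → t x ≤ n) {R : α → α → Prop}
    (hR : ∀ x i, 2 ^ i ≤ t x → R x (f^[2 ^ i] x)) (x : α) :
    ∃ l, (l ++ [r]).IsChain R ∧ (l ++ [r]).head? = some x ∧ l.length ≤ (t x).size := by
  induction hn : t x using Nat.strong_induction_on generalizing x with
  | _ n ih =>
    rcases Nat.eq_zero_or_pos n with rfl | hpos
    · exact ⟨[], by simp, by simpa [hn] using (ht x).symm, by simp⟩
    obtain ⟨i, hi⟩ : ∃ i, n.size = i + 1 := Nat.exists_eq_add_one.mpr (Nat.size_pos.mpr hpos)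
    have hlow : 2 ^ i ≤ n := Nat.lt_size.mp (by omega)
    have hhigh : n < 2 ^ (i + 1) := hi ▸ Nat.lt_size_self n
    have hw : t (f^[2 ^ i] x) < 2 ^ i := by
      have := hitTime_iterate_le ht hmin (hn ▸ hlow : 2 ^ i ≤ t x)
      rw [pow_succ] at hhigh
      omega
    obtain ⟨l, hchain, hhead, hlen⟩ :=
      ih _ (lt_of_lt_of_le hw hlow) (f^[2 ^ i] x) rfl
    refine ⟨x :: l, hchain.cons fun y hy => ?_, rfl, ?_⟩
    · obtain rfl : y = f^[2 ^ i] x := by simp_all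
      exact hR x i (hn ▸ hlow)
    · have := Nat.size_le.mpr hw
      simp only [List.length_cons]
      omega

end BinaryLifting

/-- For a spanning tree (given by `parent`, depth `d`, and `root`) of a connected graph on
`N` vertices, the set `S` of binary-lifting pairs `(v, parent^[2^i] v)` for `i < ⌊log₂ (d v)⌋`
has at most `N * ⌊log₂ N⌋` elements, and any two vertices are joined by a walk that is a
concatenation of at most `2 (⌊log₂ N⌋ + 1)` tree paths each joining a pair in `S'` (the
recorded pairs with all valid jump powers) or its reverse. -/
theorem stmt11 (N : ℕ) (parent : Fin N → Fin N) (d : Fin N → ℕ) (root : Fin N)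
    (hd : ∀ v, d v < N) (hroot : ∀ v, parent^[d v] v = root)
    (S : Finset (Fin N × Fin N))
    (hS : S = Finset.univ.biUnion fun v =>
      (Finset.range (Nat.log 2 (d v))).image fun i => (v, parent^[2 ^ i] v)) :
    S.card ≤ N * Nat.log 2 N ∧
    ∀ u v : Fin N, ∃ l : List (Fin N),
      List.Chain
        (fun x y => (∃ i, 2 ^ i ≤ d x ∧ y = parent^[2 ^ i] x) ∨
          (∃ i, 2 ^ i ≤ d y ∧ x = parent^[2 ^ i] y)) u l ∧
      (u :: l).getLast (by simp) = v ∧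
      l.length ≤ 2 * (Nat.log 2 N + 1) := by
  refine ⟨hS ▸ (card_biUnion_image_range_le _ _ _).trans ?_, fun u v => ?_⟩
  · exact (sum_le_card_nsmul univ _ _ fun v _ => Nat.log_mono_right (hd v).le).trans_eq (by simp)
  have hreach (x : Fin N) : ∃ n, parent^[n] x = root := ⟨d x, hroot x⟩
  set t := fun x => Nat.find (hreach x)
  have ht_le (x : Fin N) : t x ≤ d x := Nat.find_min' _ (hroot x)
  have hsize (x : Fin N) : (t x).size ≤ Nat.log 2 N + 1 :=
    Nat.size_le.mpr <| ((ht_le x).trans_lt (hd x)).trans (Nat.lt_pow_succ_log_self one_lt_two N)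
  have up := exists_isChain_pow_two_jumps (fun x => Nat.find_spec (hreach x))
    (fun x n hn => Nat.find_min' (hreach x) hn)
    (R := fun x y => (∃ i, 2 ^ i ≤ d x ∧ y = parent^[2 ^ i] x) ∨
      (∃ i, 2 ^ i ≤ d y ∧ x = parent^[2 ^ i] y))
    (fun x i hi => Or.inl ⟨i, hi.trans (ht_le x), rfl⟩)
  obtain ⟨a, ha, hu, halen⟩ := up u
  obtain ⟨b, hb, hv, hblen⟩ := up v
  obtain ⟨l, hl, hlast, hlen⟩ :=
    List.exists_isChain_cons_of_meet (fun _ _ h => h.symm) ha hu hb hv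
  refine ⟨l, hl, hlast, ?_⟩
  have := halen.trans (hsize u)
  have := hblen.trans (hsize v)
  omega
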